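/- arXiv:2109.03922 — 5 statements merged into one kernel-verified Lean document; each statement's English description precedes it below -/
import Mathlib

section
/- If 2 divides q, then no complete mapping of 𝔽_q is a q-cycle (i.e., permutes all elements of 𝔽_q in a single cycle). -/
theorem stmt_4 {F : Type*} [Field F] [Fintype F] (hq : 2 ∣ Fintype.card F)
    (f : F → F) (hf : Function.Bijective f)
    (hcf : Function.Bijective (fun x => f x + x)) :
    ¬ ∀ x y : F, ∃ n : ℕ, f^[n] x = y := by
  -- characteristic is 2
  have hchar : ringChar F = 2 := by
    obtain ⟨n, hn⟩ := FiniteField.card F (ringChar F)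
    have hp : (ringChar F).Prime := by
      have := hn.1
      exact CharP.char_is_prime F (ringChar F)
    have : 2 ∣ ringChar F ^ (n : ℕ) := hn.2 ▸ hq
    have h2 : 2 ∣ ringChar F := Nat.Prime.dvd_of_dvd_pow Nat.prime_two this
    exact ((Nat.prime_dvd_prime_iff_eq Nat.prime_two hp).mp h2).symm
  haveI : CharP F 2 := hchar ▸ ringChar.charP F
  intro h
  -- get a fixed point
  obtain ⟨x, hx⟩ := hcf.surjective 0
  simp only at hx
  have hfx : f x = x := by
    have hxx : x + x = 0 := CharTwo.add_self_eq_zero x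
    exact add_right_cancel (hx.trans hxx.symm)
  have hiter : ∀ n : ℕ, f^[n] x = x := by
    intro n
    induction n with
    | zero => rfl
    | succ n ih => rw [Function.iterate_succ_apply', ih, hfx]
  obtain ⟨y, hy⟩ := exists_ne x
  obtain ⟨n, hn⟩ := h x y
  rw [hiter n] at hn
  exact hy hn.symm
end

section
/- Let d ≥ 1, q a prime power with d > 1 and q > 2. Then the set of matrices in GL_d(𝔽_q) having -1 as an eigenvalue has cardinality strictly less than half of |GL_d(𝔽_q)|. -/
/-!
Count the pairs `(A, v)` with `v ≠ 0` and `v A = -v`. Since `GL_d(𝔽_q)` acts transitively on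
the nonzero row vectors, for each `v ≠ 0` the matrices with `v A = -v` form a coset of the
stabiliser of `v`, so there are `|GL_d(𝔽_q)| / (q^d - 1)` of them and exactly `|GL_d(𝔽_q)|` pairs.
On the other hand a matrix with eigenvalue `-1` has at least `q - 1 ≥ 2` eigenvectors for it (the
nonzero multiples of one of them), and `A = -1` has `q^d - 1 > 2`, so fewer than half of the
matrices have eigenvalue `-1`.
-/

open Finset

theorem Module.exists_linearEquiv_apply_eq {K V : Type*} [DivisionRing K] [AddCommGroup V]
    [Module K V] {x y : V} (hx : x ≠ 0) (hy : y ≠ 0) : ∃ e : V ≃ₗ[K] V, e x = y := by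
  obtain ⟨e, he⟩ := Submodule.exists_linearEquiv_restrict_eq
    (LinearEquiv.coord K V x hx ≪≫ₗ LinearEquiv.toSpanNonzeroSingleton K V y hy)
  have hex := he ⟨x, Submodule.mem_span_singleton_self x⟩
  rw [LinearEquiv.trans_apply, LinearEquiv.coord_self,
    LinearEquiv.toSpanNonzeroSingleton_one] at hex
  exact ⟨e, hex.symm⟩

namespace Matrix

variable {n K : Type*} [Fintype n] [Field K]

open Classical in
noncomputable def leftEigenvectors [Fintype K] (A : Matrix n n K) (c : K) : Finset (n → K) :=
  {v | v ≠ 0 ∧ v ᵥ* A = c • v}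

open Classical in
theorem card_sub_one_le_card_leftEigenvectors [Fintype K] {A : Matrix n n K} {c : K}
    (h : (leftEigenvectors A c).Nonempty) :
    Fintype.card K - 1 ≤ #(leftEigenvectors A c) := by
  obtain ⟨v, hv⟩ := h
  simp only [leftEigenvectors, mem_filter, mem_univ, true_and] at hv
  rw [← Fintype.card_units, ← card_univ]
  refine card_le_card_of_injOn (fun a : Kˣ => (a : K) • v) (fun a _ => ?_) ?_
  · simp [leftEigenvectors, hv.1, smul_vecMul, hv.2, smul_comm c]
  · intro a _ b _ hab
    exact Units.ext (smul_left_injective K hv.1 hab)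

variable [DecidableEq n]

theorem exists_GL_vecMul_eq {v w : n → K} (hv : v ≠ 0) (hw : w ≠ 0) :
    ∃ A : GL n K, v ᵥ* (A : Matrix n n K) = w := by
  obtain ⟨e, he⟩ := Module.exists_linearEquiv_apply_eq (K := K) hv hw
  refine ⟨⟨LinearMap.toMatrixRight' (e : (n → K) →ₗ[K] n → K),
    LinearMap.toMatrixRight' (e.symm : (n → K) →ₗ[K] n → K), ?_, ?_⟩, ?_⟩
  · rw [← LinearMap.toMatrixRight'_comp]; simp
  · rw [← LinearMap.toMatrixRight'_comp]; simp
  · rw [← toLinearMapRight'_apply]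
    simpa using he

theorem GeneralLinearGroup.vecMul_ne_zero {v : n → K} (hv : v ≠ 0) (A : GL n K) :
    v ᵥ* (A : Matrix n n K) ≠ 0 := fun h =>
  hv (vecMul_injective_of_isUnit A.isUnit (by simpa using h))

section Counting

open Classical

variable [Fintype K]

theorem card_filter_ne_zero :
    #({v | v ≠ 0} : Finset (n → K)) = Fintype.card K ^ Fintype.card n - 1 := by
  rw [filter_ne', card_erase_of_mem (mem_univ _), card_univ, Fintype.card_fun]

theorem leftEigenvectors_smul_one (c : K) :
    leftEigenvectors (c • 1 : Matrix n n K) c = ({v | v ≠ 0} : Finset (n → K)) := by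
  ext v
  simp [leftEigenvectors, vecMul_smul]

namespace GeneralLinearGroup

theorem card_vecMul_eq_congr {v w w' : n → K} (hw : w ≠ 0) (hw' : w' ≠ 0) :
    #{A : GL n K | v ᵥ* (A : Matrix n n K) = w} =
      #{A : GL n K | v ᵥ* (A : Matrix n n K) = w'} := by
  obtain ⟨C, hC⟩ := exists_GL_vecMul_eq hw hw'
  have hC' : w' ᵥ* ((C⁻¹ : GL n K) : Matrix n n K) = w := by
    rw [← hC, vecMul_vecMul, ← Units.val_mul, mul_inv_cancel, Units.val_one, vecMul_one]
  refine card_nbij' (· * C) (· * C⁻¹) (fun A hA => ?_) (fun A hA => ?_)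
    (fun A _ => by simp) (fun A _ => by simp)
  all_goals
    simp only [coe_filter, Set.mem_ofPred_eq, mem_univ, true_and, Units.val_mul,
      ← vecMul_vecMul] at hA ⊢
    rw [hA]
    assumption

theorem card_eq_card_ne_zero_mul_card_vecMul_eq {v w : n → K} (hv : v ≠ 0) (hw : w ≠ 0) :
    Fintype.card (GL n K) =
      #{u : n → K | u ≠ 0} * #{A : GL n K | v ᵥ* (A : Matrix n n K) = w} := by
  rw [← card_univ, card_eq_sum_card_fiberwise (f := fun A : GL n K => v ᵥ* (A : Matrix n n K))
    (t := {u | u ≠ 0}) (fun A _ => by simpa using vecMul_ne_zero hv A),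
    sum_congr rfl fun u hu => card_vecMul_eq_congr (by simpa using hu) hw, sum_const,
    smul_eq_mul]

theorem sum_card_leftEigenvectors [Nonempty n] {c : K} (hc : c ≠ 0) :
    ∑ A : GL n K, #(leftEigenvectors (A : Matrix n n K) c) = Fintype.card (GL n K) := by
  have hK : 0 < #{u : n → K | u ≠ 0} := card_pos.mpr ⟨1, by simp⟩
  refine Nat.eq_of_mul_eq_mul_left hK ?_
  calc #{u : n → K | u ≠ 0} * ∑ A : GL n K, #(leftEigenvectors (A : Matrix n n K) c)
      = #{u : n → K | u ≠ 0} * ∑ v ∈ {u : n → K | u ≠ 0},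
          #{A : GL n K | v ᵥ* (A : Matrix n n K) = c • v} := by
        congr 1
        convert sum_card_bipartiteAbove_eq_sum_card_bipartiteBelow
          (fun (A : GL n K) v => v ᵥ* (A : Matrix n n K) = c • v) using 3 with A
        · ext v
          simp [leftEigenvectors, bipartiteAbove]
        · rfl
    _ = ∑ v ∈ {u : n → K | u ≠ 0}, Fintype.card (GL n K) := by
        rw [mul_sum]
        refine sum_congr rfl fun v hv => ?_
        rw [mem_filter] at hv
        exact (card_eq_card_ne_zero_mul_card_vecMul_eq hv.2 (smul_ne_zero hc hv.2)).symm
    _ = #{u : n → K | u ≠ 0} * Fintype.card (GL n K) := by rw [sum_const, smul_eq_mul]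

end GeneralLinearGroup

end Counting

end Matrix

theorem stmt_8 {F : Type*} [Field F] [Fintype F] {d : ℕ} (hd : 1 < d)
    (hq : 2 < Fintype.card F) :
    2 * Nat.card {A : GL (Fin d) F // ∃ v : Fin d → F, v ≠ 0 ∧
        Matrix.vecMul v (A : Matrix (Fin d) (Fin d) F) = -v} <
      Nat.card (GL (Fin d) F) := by
  classical
  have : Nonempty (Fin d) := ⟨⟨0, by omega⟩⟩
  set E := fun A : GL (Fin d) F => Matrix.leftEigenvectors (A : Matrix (Fin d) (Fin d) F) (-1)
  set T : Finset (GL (Fin d) F) := {A | (E A).Nonempty}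
  have hT : Nat.card {A : GL (Fin d) F // ∃ v : Fin d → F, v ≠ 0 ∧
      Matrix.vecMul v (A : Matrix (Fin d) (Fin d) F) = -v} = #T := by
    rw [Nat.card_eq_fintype_card, Fintype.card_subtype]
    simp [T, E, Matrix.leftEigenvectors, Finset.Nonempty]
  have hE_neg_one : 2 < #(E (-1)) := by
    simp only [E]
    rw [show ((-1 : GL (Fin d) F) : Matrix (Fin d) (Fin d) F) = (-1 : F) • 1 by simp,
      Matrix.leftEigenvectors_smul_one, Matrix.card_filter_ne_zero, Fintype.card_fin]
    have : 3 ^ 2 ≤ Fintype.card F ^ d :=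
      (Nat.pow_le_pow_left hq 2).trans (Nat.pow_le_pow_right (by omega) hd)
    omega
  calc 2 * Nat.card _ = ∑ _A ∈ T, 2 := by rw [hT, sum_const, smul_eq_mul, mul_comm]
    _ < ∑ A ∈ T, #(E A) :=
        sum_lt_sum (fun A hA => (by omega : 2 ≤ Fintype.card F - 1).trans
            (Matrix.card_sub_one_le_card_leftEigenvectors (mem_filter.1 hA).2))
          ⟨-1, mem_filter.2 ⟨mem_univ _, card_pos.1 (by omega)⟩, hE_neg_one⟩
    _ ≤ ∑ A, #(E A) := sum_le_sum_of_subset (subset_univ T)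
    _ = Nat.card (GL (Fin d) F) := by
        rw [Matrix.GeneralLinearGroup.sum_card_leftEigenvectors (neg_ne_zero.2 one_ne_zero),
          Nat.card_eq_fintype_card]
end

section
/- Let p be a prime, Q = X - 1 ∈ 𝔽_q[X] (q a power of p), e ≥ 1 a power of p, and U ∈ 𝔽_q[X] with (X-1) ∤ U. Then every cycle of the permutation λ: R + (Q^e) ↦ RX + U + (Q^e) of 𝔽_q[X]/((X-1)^e) has length exactly p·e. -/
open Polynomial Finset

lemma key_dvd {F : Type*} [Field F] {p : ℕ} (hp : p.Prime) [CharP F p]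
    (n : ℕ) (U V : F[X]) (hU : ¬ (X - 1 : F[X]) ∣ U) (ℓ : ℕ) (hℓ : 0 < ℓ) :
    ((X - 1 : F[X]) ^ (p ^ n) ∣
      V * (X ^ ℓ - 1) + U * (∑ i ∈ range ℓ, X ^ i)) ↔ p ^ (n + 1) ∣ ℓ := by
  haveI : Fact p.Prime := ⟨hp⟩
  set a := ℓ.factorization p with ha
  set m := ℓ / p ^ a with hm
  have hℓeq : p ^ a * m = ℓ := Nat.ordProj_mul_ordCompl_eq_self ℓ p
  have hpm : ¬ p ∣ m := Nat.not_dvd_ordCompl hp hℓ.ne'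
  set W : F[X] := ∑ i ∈ range m, (X ^ p ^ a) ^ i with hW
  have hXsub : (X - 1 : F[X]) = X - C 1 := by simp
  have hne : (X - 1 : F[X]) ≠ 0 := by rw [hXsub]; exact X_sub_C_ne_zero 1
  have hA : (X : F[X]) ^ p ^ a - 1 = (X - 1) ^ p ^ a := by
    rw [sub_pow_char_pow]; simp
  have hB : (X : F[X]) ^ ℓ - 1 = W * (X - 1) ^ p ^ a := by
    rw [← hA, ← hℓeq, pow_mul, ← geom_sum_mul]
  have hpa1 : 1 ≤ p ^ a := Nat.one_le_pow _ _ hp.pos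
  have hpow : (X - 1 : F[X]) ^ p ^ a = (X - 1) ^ (p ^ a - 1) * (X - 1) := by
    rw [← pow_succ, Nat.sub_add_cancel hpa1]
  have hGeom : (∑ i ∈ range ℓ, (X : F[X]) ^ i) = W * (X - 1) ^ (p ^ a - 1) := by
    have h1 : (∑ i ∈ range ℓ, (X : F[X]) ^ i) * (X - 1)
        = (W * (X - 1) ^ (p ^ a - 1)) * (X - 1) := by
      rw [geom_sum_mul, hB, hpow]; ring
    exact mul_right_cancel₀ hne h1
  have hWnd : ¬ (X - 1 : F[X]) ∣ W := by
    rw [hXsub, dvd_iff_isRoot]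
    have : W.IsRoot 1 ↔ (m : F) = 0 := by
      simp [hW, IsRoot, eval_finset_sum]
    rw [this, CharP.cast_eq_zero_iff F p]
    exact hpm
  have hKnd : ¬ (X - 1 : F[X]) ∣ W * (V * (X - 1) + U) := by
    have hprime : Prime (X - 1 : F[X]) := by rw [hXsub]; exact prime_X_sub_C 1
    intro h
    rcases hprime.dvd_mul.mp h with h | h
    · exact hWnd h
    · exact hU ((dvd_add_right (dvd_mul_left _ _)).mp h)
  have hexpr : V * ((X : F[X]) ^ ℓ - 1) + U * (∑ i ∈ range ℓ, X ^ i)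
      = (X - 1) ^ (p ^ a - 1) * (W * (V * (X - 1) + U)) := by
    rw [hB, hGeom, hpow]; ring
  rw [hexpr]
  have hiff1 : p ^ (n + 1) ∣ ℓ ↔ n + 1 ≤ a :=
    Nat.Prime.pow_dvd_iff_le_factorization hp hℓ.ne'
  constructor
  · intro h
    have hle : p ^ n ≤ p ^ a - 1 := by
      by_contra hlt
      push_neg at hlt
      have h2 : (X - 1 : F[X]) ^ (p ^ a - 1) * (X - 1) ∣
          (X - 1) ^ (p ^ a - 1) * (W * (V * (X - 1) + U)) := by
        refine dvd_trans ?_ h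
        rw [← pow_succ]
        exact pow_dvd_pow _ hlt
      exact hKnd ((mul_dvd_mul_iff_left (pow_ne_zero _ hne)).mp h2)
    have hlt' : p ^ n < p ^ a :=
      lt_of_le_of_lt hle (Nat.sub_lt (by positivity) Nat.one_pos)
    have hna : n + 1 ≤ a := Nat.pow_lt_pow_iff_right hp.one_lt |>.mp hlt'
    exact hiff1.mpr hna
  · intro h
    have hna : n + 1 ≤ a := hiff1.mp h
    have h1 : p ^ n + 1 ≤ p ^ a := by
      calc p ^ n + 1 ≤ p ^ n + p ^ n := by simp [Nat.one_le_pow _ _ hp.pos]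
        _ = p ^ n * 2 := by ring
        _ ≤ p ^ n * p := Nat.mul_le_mul_left _ hp.two_le
        _ = p ^ (n + 1) := by rw [pow_succ]
        _ ≤ p ^ a := Nat.pow_le_pow_right hp.pos hna
    have hle : p ^ n ≤ p ^ a - 1 := Nat.le_sub_one_of_lt h1
    exact dvd_mul_of_dvd_left (pow_dvd_pow _ hle) _

theorem main_aux {F : Type*} [Field F] {p : ℕ} (hp : p.Prime)
    [CharP F p] (n : ℕ) (U : F[X]) (hU : ¬ (X - 1 : F[X]) ∣ U) (V : F[X]) :
    Function.minimalPeriod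
      (fun S : F[X] ⧸ Ideal.span {(X - 1 : F[X]) ^ p ^ n} =>
        S * Ideal.Quotient.mk (Ideal.span {(X - 1 : F[X]) ^ p ^ n}) X +
          Ideal.Quotient.mk (Ideal.span {(X - 1 : F[X]) ^ p ^ n}) U)
      (Ideal.Quotient.mk (Ideal.span {(X - 1 : F[X]) ^ p ^ n}) V) = p * p ^ n := by
  set I : Ideal F[X] := Ideal.span {(X - 1 : F[X]) ^ p ^ n} with hI
  set π := Ideal.Quotient.mk I with hπ
  set f : (F[X] ⧸ I) → (F[X] ⧸ I) := fun S => S * π X + π U with hf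
  have hiter : ∀ (S : F[X] ⧸ I) (ℓ : ℕ),
      f^[ℓ] S = S * π (X ^ ℓ) + π (U * ∑ i ∈ range ℓ, X ^ i) := by
    intro S ℓ
    induction ℓ with
    | zero => simp
    | succ k ih =>
      rw [Function.iterate_succ_apply', ih, geom_sum_succ]
      show (S * π (X ^ k) + π (U * ∑ i ∈ range k, X ^ i)) * π X + π U = _
      simp only [map_mul, map_add, map_pow, map_one, mul_one, pow_succ]
      ring
  have hperiod : ∀ ℓ : ℕ, 0 < ℓ → (Function.IsPeriodicPt f ℓ (π V) ↔ p * p ^ n ∣ ℓ) := by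
    intro ℓ hℓ
    have h1 : Function.IsPeriodicPt f ℓ (π V) ↔
        (X - 1 : F[X]) ^ p ^ n ∣ V * (X ^ ℓ - 1) + U * (∑ i ∈ range ℓ, X ^ i) := by
      unfold Function.IsPeriodicPt Function.IsFixedPt
      rw [hiter, ← map_mul, ← map_add, Ideal.Quotient.eq, hI, Ideal.mem_span_singleton]
      have heq : V * X ^ ℓ + U * (∑ i ∈ range ℓ, X ^ i) - V
          = V * ((X : F[X]) ^ ℓ - 1) + U * (∑ i ∈ range ℓ, X ^ i) := by ring
      rw [heq]
    rw [h1, key_dvd hp n U V hU ℓ hℓ, pow_succ, mul_comm (p ^ n) p]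
  have hpe : 0 < p * p ^ n := Nat.mul_pos hp.pos (pow_pos hp.pos n)
  have h1 : Function.IsPeriodicPt f (p * p ^ n) (π V) := (hperiod _ hpe).mpr dvd_rfl
  have h2 : Function.minimalPeriod f (π V) ∣ p * p ^ n := h1.minimalPeriod_dvd
  have hpos : 0 < Function.minimalPeriod f (π V) := h1.minimalPeriod_pos hpe
  have h3 : p * p ^ n ∣ Function.minimalPeriod f (π V) :=
    (hperiod _ hpos).mp (Function.isPeriodicPt_minimalPeriod f _)
  exact Nat.dvd_antisymm h2 h3

theorem stmt_16 {F : Type*} [Field F] [Fintype F] {p : ℕ} (hp : p.Prime)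
    [CharP F p] (e : ℕ) (he : ∃ n : ℕ, e = p ^ n) (U : F[X])
    (hU : ¬ (X - 1 : F[X]) ∣ U)
    (R : F[X] ⧸ Ideal.span {(X - 1 : F[X]) ^ e}) :
    Function.minimalPeriod
      (fun S : F[X] ⧸ Ideal.span {(X - 1 : F[X]) ^ e} =>
        S * Ideal.Quotient.mk (Ideal.span {(X - 1 : F[X]) ^ e}) X +
          Ideal.Quotient.mk (Ideal.span {(X - 1 : F[X]) ^ e}) U) R = p * e := by
  obtain ⟨n, rfl⟩ := he
  obtain ⟨V, rfl⟩ := Ideal.Quotient.mk_surjective R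
  exact main_aux hp n U hU V
end

section
/- Let p be an odd prime and k ≥ 1. Then there exists a complete mapping of the additive group 𝔽_p^k whose cycle decomposition consists of a single cycle of length p^k. -/
open Finset

namespace Stmt17

variable {p k : ℕ}

/-- The "odometer" map on base-`p` digit strings: add one with carry,
where coordinate `0` is the least significant digit. -/
def odo (x : Fin k → ZMod p) : Fin k → ZMod p :=
  fun j => if ∀ i, i < j → x i = -1 then x j + 1 else x j

lemma odo_apply (x : Fin k → ZMod p) (j : Fin k) :
    odo x j = if ∀ i, i < j → x i = -1 then x j + 1 else x j := rfl

/-- The `i`-th digit (as a natural number) of `x`. -/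
def dig (x : Fin k → ZMod p) (i : ℕ) : ℕ :=
  if h : i < k then (x ⟨i, h⟩).val else 0

/-- Encode a digit string as a natural number in `[0, p^k)`. -/
def enc (x : Fin k → ZMod p) : ℕ := ∑ i ∈ range k, dig x i * p ^ i

lemma geom (hp : 1 ≤ p) : ∀ n : ℕ, ∑ i ∈ range n, (p - 1) * p ^ i = p ^ n - 1
  | 0 => by simp
  | n + 1 => by
    rw [Finset.sum_range_succ, geom hp n, pow_succ]
    have h1 : 1 ≤ p ^ n := Nat.one_le_pow _ _ hp
    have h3 : (p - 1) * p ^ n = p ^ n * p - p ^ n := by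
      rw [Nat.sub_mul, one_mul, Nat.mul_comm]
    have h4 : p ^ n ≤ p ^ n * p := Nat.le_mul_of_pos_right _ hp
    omega

lemma digits_inj (hp : 1 < p) : ∀ (n : ℕ) (d e : ℕ → ℕ),
    (∀ i, d i < p) → (∀ i, e i < p) →
    (∑ i ∈ range n, d i * p ^ i) = (∑ i ∈ range n, e i * p ^ i) →
    ∀ i < n, d i = e i := by
  intro n
  induction n with
  | zero => intro d e _ _ _ i hi; omega
  | succ n ih =>
    intro d e hd he hsum i hi
    have hshift : ∀ (f : ℕ → ℕ),
        (∑ i ∈ range (n+1), f i * p ^ i)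
          = p * (∑ i ∈ range n, f (i+1) * p ^ i) + f 0 := by
      intro f
      rw [Finset.sum_range_succ' (fun i => f i * p ^ i) n]
      simp only [pow_zero, mul_one, Finset.mul_sum]
      congr 1
      refine Finset.sum_congr rfl (fun i _ => ?_)
      ring
    rw [hshift d, hshift e] at hsum
    have h0 : d 0 = e 0 := by
      have h := congrArg (· % p) hsum
      simpa [Nat.mul_add_mod, Nat.mod_eq_of_lt (hd 0), Nat.mod_eq_of_lt (he 0)] using h
    have hAB : (∑ i ∈ range n, d (i+1) * p ^ i) = (∑ i ∈ range n, e (i+1) * p ^ i) := by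
      have hp0 : 0 < p := by omega
      have : p * (∑ i ∈ range n, d (i+1) * p ^ i) = p * (∑ i ∈ range n, e (i+1) * p ^ i) := by
        omega
      exact Nat.eq_of_mul_eq_mul_left hp0 this
    rcases i with _ | m
    · exact h0
    · exact ih (fun i => d (i+1)) (fun i => e (i+1)) (fun i => hd _) (fun i => he _) hAB m
        (by omega)

lemma dig_lt (hp : 1 < p) (x : Fin k → ZMod p) (i : ℕ) : dig x i < p := by
  haveI : NeZero p := ⟨by omega⟩
  unfold dig
  split
  · exact ZMod.val_lt _
  · omega

lemma enc_lt (hp : 1 < p) (x : Fin k → ZMod p) : enc x < p ^ k := by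
  have hle : enc x ≤ ∑ i ∈ range k, (p - 1) * p ^ i := by
    refine Finset.sum_le_sum (fun i _ => ?_)
    exact Nat.mul_le_mul_right _ (by have := dig_lt hp x i; omega)
  rw [geom (by omega) k] at hle
  have : 1 ≤ p ^ k := Nat.one_le_pow _ _ (by omega)
  omega

lemma enc_inj (hp : 1 < p) {x y : Fin k → ZMod p} (h : enc x = enc y) : x = y := by
  haveI : NeZero p := ⟨by omega⟩
  have hd := digits_inj hp k (dig x) (dig y) (dig_lt hp x) (dig_lt hp y) h
  funext j
  have hj := hd j.val j.isLt
  unfold dig at hj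
  rw [dif_pos j.isLt, dif_pos j.isLt] at hj
  have hx : ((x ⟨j.val, j.isLt⟩).val : ZMod p) = ((y ⟨j.val, j.isLt⟩).val : ZMod p) := by
    rw [hj]
  rw [ZMod.natCast_val, ZMod.natCast_val, ZMod.cast_id, ZMod.cast_id] at hx
  exact hx

lemma val_neg_one (hp : 1 < p) : (-1 : ZMod p).val = p - 1 := by
  haveI : NeZero p := ⟨by omega⟩
  have h : (-1 : ZMod p) = ((p - 1 : ℕ) : ZMod p) := by
    have : ((p : ℕ) : ZMod p) = 0 := ZMod.natCast_self p
    push_cast [Nat.cast_sub (by omega : 1 ≤ p)]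
    rw [this]; ring
  rw [h, ZMod.val_cast_of_lt (by omega)]

lemma val_add_one (hp : 1 < p) {a : ZMod p} (ha : a ≠ -1) : (a + 1).val = a.val + 1 := by
  haveI : NeZero p := ⟨by omega⟩
  have hlt : a.val < p := ZMod.val_lt a
  have hne : a.val ≠ p - 1 := by
    intro h
    apply ha
    have : (a.val : ZMod p) = a := by rw [ZMod.natCast_val, ZMod.cast_id]
    rw [← this, h]
    have hp' : ((p : ℕ) : ZMod p) = 0 := ZMod.natCast_self p
    push_cast [Nat.cast_sub (by omega : 1 ≤ p)]
    rw [hp']; ring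
  have hcast : a + 1 = ((a.val + 1 : ℕ) : ZMod p) := by
    push_cast
    rw [ZMod.natCast_val, ZMod.cast_id]
  rw [hcast, ZMod.val_cast_of_lt (by omega)]

lemma enc_odo (hp : 1 < p) {x : Fin k → ZMod p} (hx : ¬ ∀ j, x j = -1) :
    enc (odo x) = enc x + 1 := by
  classical
  haveI : NeZero p := ⟨by omega⟩
  push_neg at hx
  obtain ⟨j0, hj0⟩ := hx
  have hQ : ∃ i : ℕ, ∃ h : i < k, x ⟨i, h⟩ ≠ -1 := ⟨j0.val, j0.isLt, by simpa using hj0⟩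
  obtain ⟨r, hrk, hxr, hmin⟩ :
      ∃ r : ℕ, ∃ hr : r < k, x ⟨r, hr⟩ ≠ -1 ∧ (∀ i, i < r → ∀ h : i < k, x ⟨i, h⟩ = -1) := by
    refine ⟨Nat.find hQ, (Nat.find_spec hQ).1, (Nat.find_spec hQ).2, ?_⟩
    intro i hi h
    by_contra hne
    exact Nat.find_min hQ hi ⟨h, hne⟩
  -- carry characterization
  have hcarry : ∀ j : Fin k, (∀ i, i < j → x i = -1) ↔ j.val ≤ r := by
    intro j
    constructor
    · intro hall
      by_contra hgt
      push_neg at hgt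
      exact hxr (hall ⟨r, hrk⟩ (show (r : ℕ) < j.val from hgt))
    · intro hle i hi
      have : i.val < r := lt_of_lt_of_le (show (i : ℕ) < j.val from hi) hle
      have := hmin i.val this i.isLt
      simpa using this
  set G : ℕ → ℤ := fun i => if i ≤ r then (p : ℤ) ^ i else 0 with hG
  have key : ∀ i ∈ range k, (dig (odo x) i : ℤ) * (p : ℤ) ^ i
      = (dig x i : ℤ) * (p : ℤ) ^ i + (G i - G (i + 1)) := by
    intro i hi
    rw [Finset.mem_range] at hi
    rcases lt_trichotomy i r with hlt | heq | hgt
    · -- digit below r : was p-1, becomes 0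
      have hxi : x ⟨i, hi⟩ = -1 := hmin i hlt hi
      have hodos : odo x ⟨i, hi⟩ = 0 := by
        have hc : (∀ i', i' < (⟨i, hi⟩ : Fin k) → x i' = -1) :=
          (hcarry ⟨i, hi⟩).mpr (by simpa using le_of_lt hlt)
        rw [odo_apply, if_pos hc, hxi, neg_add_cancel]
      have hd1 : dig (odo x) i = 0 := by
        unfold dig; rw [dif_pos hi, hodos, ZMod.val_zero]
      have hd2 : dig x i = p - 1 := by
        unfold dig; rw [dif_pos hi, hxi, val_neg_one hp]
      have hGi : G i = (p : ℤ) ^ i := if_pos (le_of_lt hlt)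
      have hGi1 : G (i + 1) = (p : ℤ) ^ (i + 1) := if_pos (by omega)
      rw [hd1, hd2, hGi, hGi1]
      push_cast [Nat.cast_sub (by omega : 1 ≤ p)]
      ring
    · -- digit at r : increments
      have hxi : x ⟨i, hi⟩ ≠ -1 := by
        have : (⟨i, hi⟩ : Fin k) = ⟨r, hrk⟩ := by simp [heq]
        rw [this]; exact hxr
      have hodos : odo x ⟨i, hi⟩ = x ⟨i, hi⟩ + 1 := by
        have hc : (∀ i', i' < (⟨i, hi⟩ : Fin k) → x i' = -1) :=
          (hcarry ⟨i, hi⟩).mpr (by simp [heq])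
        rw [odo_apply, if_pos hc]
      have hd1 : dig (odo x) i = dig x i + 1 := by
        unfold dig; rw [dif_pos hi, dif_pos hi, hodos, val_add_one hp hxi]
      have hGi : G i = (p : ℤ) ^ i := if_pos (le_of_eq heq)
      have hGi1 : G (i + 1) = 0 := if_neg (by omega)
      rw [hd1, hGi, hGi1]
      push_cast
      ring
    · -- digit above r : unchanged
      have hodos : odo x ⟨i, hi⟩ = x ⟨i, hi⟩ := by
        have hc : ¬ (∀ i', i' < (⟨i, hi⟩ : Fin k) → x i' = -1) := by
          intro hall
          exact absurd ((hcarry ⟨i, hi⟩).mp hall) (by simpa using hgt)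
        rw [odo_apply, if_neg hc]
      have hd1 : dig (odo x) i = dig x i := by
        unfold dig; rw [dif_pos hi, dif_pos hi, hodos]
      have hGi : G i = 0 := if_neg (by omega)
      have hGi1 : G (i + 1) = 0 := if_neg (by omega)
      rw [hd1, hGi, hGi1]
      ring
  have hsum : (enc (odo x) : ℤ) = (enc x : ℤ) + 1 := by
    have h1 : (enc (odo x) : ℤ) = ∑ i ∈ range k, (dig (odo x) i : ℤ) * (p : ℤ) ^ i := by
      unfold enc; push_cast; rfl
    have h2 : (enc x : ℤ) = ∑ i ∈ range k, (dig x i : ℤ) * (p : ℤ) ^ i := by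
      unfold enc; push_cast; rfl
    rw [h1, h2, Finset.sum_congr rfl key, Finset.sum_add_distrib,
      Finset.sum_range_sub' G k]
    have hG0 : G 0 = 1 := by simp [hG]
    have hGk : G k = 0 := if_neg (by omega)
    rw [hG0, hGk]
    ring
  exact_mod_cast hsum

lemma enc_allNeg (hp : 1 < p) : enc (fun _ : Fin k => (-1 : ZMod p)) = p ^ k - 1 := by
  have : ∀ i ∈ range k, dig (fun _ : Fin k => (-1 : ZMod p)) i * p ^ i = (p - 1) * p ^ i := by
    intro i hi
    rw [Finset.mem_range] at hi
    simp [dig, dif_pos hi, val_neg_one hp]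
  rw [enc, Finset.sum_congr rfl this, geom (by omega) k]

lemma enc_zero : enc (fun _ : Fin k => (0 : ZMod p)) = 0 := by
  simp [enc, dig]

lemma odo_allNeg : odo (fun _ : Fin k => (-1 : ZMod p)) = fun _ => (0 : ZMod p) := by
  funext j
  have hc : ∀ i : Fin k, i < j → (fun _ : Fin k => (-1 : ZMod p)) i = -1 := fun _ _ => rfl
  rw [odo_apply, if_pos hc, neg_add_cancel]

lemma enc_iter (hp : 1 < p) : ∀ (m : ℕ) (x : Fin k → ZMod p), enc x + m < p ^ k →
    enc (odo^[m] x) = enc x + m := by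
  intro m
  induction m with
  | zero => intro x _; simp
  | succ m ih =>
    intro x hm
    have hlt : enc x + m < p ^ k := by omega
    have hIH := ih x hlt
    have hne : ¬ ∀ j, (odo^[m] x) j = -1 := by
      intro hall
      have : odo^[m] x = fun _ : Fin k => (-1 : ZMod p) := funext hall
      rw [this, enc_allNeg hp] at hIH
      have : 1 ≤ p ^ k := Nat.one_le_pow _ _ (by omega)
      omega
    rw [Function.iterate_succ_apply', enc_odo hp hne, hIH]
    omega

lemma odo_add_inj [Fact p.Prime] (hp : 1 < p) (h2 : (2 : ZMod p) ≠ 0) {x y : Fin k → ZMod p}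
    (h : ∀ j, odo x j + x j = odo y j + y j) : x = y := by
  have H : ∀ n (j : Fin k), j.val < n → x j = y j := by
    intro n
    induction n with
    | zero => intro j hj; omega
    | succ n ih =>
      intro j hj
      rcases Nat.lt_succ_iff_lt_or_eq.mp hj with h' | h'
      · exact ih j h'
      · have hpre : ∀ i, i < j → x i = y i := by
          intro i hi
          have hij : (i : ℕ) < j.val := hi
          exact ih i (by omega)
        have hcc : (∀ i, i < j → x i = -1) ↔ (∀ i, i < j → y i = -1) := by
          constructor <;> intro hall i hi
          · rw [← hpre i hi]; exact hall i hi
          · rw [hpre i hi]; exact hall i hi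
        have hj' := h j
        by_cases hc : ∀ i, i < j → x i = -1
        · rw [odo_apply, odo_apply, if_pos hc, if_pos (hcc.mp hc)] at hj'
          have h2' : 2 * x j = 2 * y j := by linear_combination hj'
          exact mul_left_cancel₀ h2 h2'
        · rw [odo_apply, odo_apply, if_neg hc, if_neg (fun hy => hc (hcc.mpr hy))] at hj'
          have h2' : 2 * x j = 2 * y j := by linear_combination hj'
          exact mul_left_cancel₀ h2 h2'
  funext j
  exact H k j j.isLt

lemma odo_inj {x y : Fin k → ZMod p} (h : odo x = odo y) : x = y := by
  have H : ∀ n (j : Fin k), j.val < n → x j = y j := by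
    intro n
    induction n with
    | zero => intro j hj; omega
    | succ n ih =>
      intro j hj
      rcases Nat.lt_succ_iff_lt_or_eq.mp hj with h' | h'
      · exact ih j h'
      · have hpre : ∀ i, i < j → x i = y i := by
          intro i hi
          have hij : (i : ℕ) < j.val := hi
          exact ih i (by omega)
        have hcc : (∀ i, i < j → x i = -1) ↔ (∀ i, i < j → y i = -1) := by
          constructor <;> intro hall i hi
          · rw [← hpre i hi]; exact hall i hi
          · rw [hpre i hi]; exact hall i hi
        have hj' : odo x j = odo y j := by rw [h]
        by_cases hc : ∀ i, i < j → x i = -1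
        · rw [odo_apply, odo_apply, if_pos hc, if_pos (hcc.mp hc)] at hj'
          exact add_right_cancel hj'
        · rw [odo_apply, odo_apply, if_neg hc, if_neg (fun hy => hc (hcc.mpr hy))] at hj'
          exact hj'
  funext j
  exact H k j j.isLt

end Stmt17

theorem stmt_17 {p : ℕ} (hp : p.Prime) (hodd : Odd p) (k : ℕ) (hk : 1 ≤ k) :
    ∃ f : (Fin k → ZMod p) → (Fin k → ZMod p),
      Function.Bijective f ∧
      Function.Bijective (fun x => f x + x) ∧
      ∀ x y : Fin k → ZMod p, ∃ n : ℕ, f^[n] x = y := by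
  haveI : Fact p.Prime := ⟨hp⟩
  have hp1 : 1 < p := hp.one_lt
  haveI : NeZero p := ⟨by omega⟩
  have hpne2 : p ≠ 2 := by
    rcases hodd with ⟨m, hm⟩
    omega
  have h2 : (2 : ZMod p) ≠ 0 := by
    intro h
    have h2' : ((2 : ℕ) : ZMod p) = 0 := by exact_mod_cast h
    have := (ZMod.natCast_eq_zero_iff 2 p).mp h2'
    have := Nat.le_of_dvd (by norm_num) this
    interval_cases p <;> simp_all
  refine ⟨Stmt17.odo, ?_, ?_, ?_⟩
  · exact Finite.injective_iff_bijective.mp (fun x y h => Stmt17.odo_inj h)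
  · refine Finite.injective_iff_bijective.mp (fun x y h => ?_)
    apply Stmt17.odo_add_inj hp1 h2
    intro j
    exact congrFun h j
  · intro x y
    set N := p ^ k with hN
    have hNpos : 1 ≤ N := Nat.one_le_pow _ _ (by omega)
    have hex : Stmt17.enc x < N := Stmt17.enc_lt hp1 x
    have hey : Stmt17.enc y < N := Stmt17.enc_lt hp1 y
    refine ⟨Stmt17.enc y + (1 + (N - 1 - Stmt17.enc x)), ?_⟩
    rw [Function.iterate_add_apply, Function.iterate_add_apply]
    have h1 : Stmt17.odo^[N - 1 - Stmt17.enc x] x = fun _ : Fin k => (-1 : ZMod p) := by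
      apply Stmt17.enc_inj hp1
      rw [Stmt17.enc_iter hp1 _ x (by omega), Stmt17.enc_allNeg hp1]
      omega
    rw [h1]
    have h2' : Stmt17.odo^[1] (fun _ : Fin k => (-1 : ZMod p)) = fun _ => (0 : ZMod p) := by
      simpa using Stmt17.odo_allNeg
    rw [h2']
    apply Stmt17.enc_inj hp1
    rw [Stmt17.enc_iter hp1 _ _ (by rw [Stmt17.enc_zero]; omega), Stmt17.enc_zero]
    omega
end

section
/- Let p be an odd prime and k ≥ 2. Define h: 𝔽_p^k → 𝔽_p^k by h(x_1,…,x_k) = (x_1,…,x_{ℓ-1}, x_ℓ+1, x_{ℓ+1}+1, …, x_k+1) where ℓ is minimal with x_{ℓ+1} = ⋯ = x_k = 0 (and h adds 1 to all coordinates if all of x_2,…,x_k are 0). Then h is a permutation of 𝔽_p^k consisting of a single cycle of length p^k, and both h and x ↦ h(x)+x are bijections. -/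
/-!
Translating by the all-ones vector conjugates `h` to the base-`p` increment with the last
coordinate as least significant digit: `h^[n] 1` is `1` plus the digits of `n`, so the orbit of
`1` is all of `𝔽_p^k`. Both `h` and `x ↦ h x + x` have the form `x ↦ a x + c(x)` with carry
pattern `c(x) i = [x j = 0 for all j > i]` and `a ∈ {1, 2}` a unit of `ZMod p` (`p` is odd);
downward induction on the coordinates shows that the image determines the carry pattern,
hence `x`.
-/

section MulAddCarry

variable {ι R : Type*} [Fintype ι] [LinearOrder ι] [Ring R] [DecidableEq R]

def mulAddCarry (a : R) (x : ι → R) : ι → R :=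
  fun i => a * x i + if ∀ j, i < j → x j = 0 then 1 else 0

theorem forall_gt_mulAddCarry_eq_one_iff {a : R} (ha : IsLeftRegular a) (x : ι → R) (i : ι) :
    (∀ j, i < j → mulAddCarry a x j = 1) ↔ ∀ j, i < j → x j = 0 := by
  refine ⟨fun hx j hij => ?_, fun hx j hij => ?_⟩
  · induction j using WellFoundedGT.induction with
    | _ j ih =>
      have hzero : ∀ l, j < l → x l = 0 := fun l hjl => ih l hjl (hij.trans hjl)
      have hone := hx j hij
      rw [mulAddCarry, if_pos hzero, add_eq_right, ← mul_zero a] at hone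
      exact ha hone
  · have hzero : ∀ l, j < l → x l = 0 := fun l hjl => hx l (hij.trans hjl)
    rw [mulAddCarry, if_pos hzero, hx j hij, mul_zero, zero_add]

theorem mulAddCarry_injective {a : R} (ha : IsLeftRegular a) :
    Function.Injective (mulAddCarry a : (ι → R) → ι → R) := by
  intro x y hxy
  funext i
  have hcarry : (∀ j, i < j → x j = 0) ↔ ∀ j, i < j → y j = 0 := by
    rw [← forall_gt_mulAddCarry_eq_one_iff ha, ← forall_gt_mulAddCarry_eq_one_iff ha, hxy]
  have hi := congrFun hxy i
  rw [mulAddCarry, mulAddCarry, if_congr hcarry rfl rfl, add_left_inj] at hi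
  exact ha hi

theorem mulAddCarry_bijective [Finite R] {a : R} (ha : IsLeftRegular a) :
    Function.Bijective (mulAddCarry a : (ι → R) → ι → R) :=
  Finite.injective_iff_bijective.mp (mulAddCarry_injective ha)

end MulAddCarry

theorem Nat.pow_dvd_succ_iff_forall_dvd_div_pow_add_one (p e n : ℕ) :
    p ^ e ∣ n + 1 ↔ ∀ m < e, p ∣ n / p ^ m + 1 := by
  induction e with
  | zero => simp
  | succ e ih =>
    rw [Nat.forall_lt_succ_right, ← ih, pow_succ]
    constructor
    · intro hdvd
      have he : p ^ e ∣ n + 1 := dvd_of_mul_right_dvd hdvd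
      exact ⟨he, Nat.succ_div_of_dvd he ▸ (Nat.dvd_div_iff_mul_dvd he).mpr hdvd⟩
    · rintro ⟨he, hp⟩
      exact (Nat.dvd_div_iff_mul_dvd he).mp (Nat.succ_div_of_dvd he ▸ hp)

theorem Function.Injective.exists_iterate_eq {α : Type*} [Finite α] {f : α → α}
    (hf : Function.Injective f) {z : α} (hz : ∀ y, ∃ n, f^[n] z = y) (x y : α) :
    ∃ n, f^[n] x = y := by
  let σ : Equiv.Perm α := Equiv.ofBijective f (Finite.injective_iff_bijective.mp hf)
  have hσ (y : α) : σ.SameCycle z y := by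
    obtain ⟨n, hn⟩ := hz y
    exact ⟨n, by rwa [zpow_natCast, ← Equiv.Perm.iterate_eq_pow]⟩
  obtain ⟨n, hn⟩ := ((hσ x).symm.trans (hσ y)).exists_nat_pow_eq
  exact ⟨n, by rwa [← Equiv.Perm.iterate_eq_pow] at hn⟩

def baseDigits (p k n : ℕ) : Fin k → ZMod p :=
  fun i => ((n / p ^ (i.rev : ℕ) : ℕ) : ZMod p)

theorem baseDigits_surjective (p k : ℕ) [NeZero p] : Function.Surjective (baseDigits p k) := by
  intro y
  let n := finFunctionFinEquiv (fun j : Fin k => (⟨(y j.rev).val, ZMod.val_lt _⟩ : Fin p))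
  refine ⟨n, funext fun i => ?_⟩
  have hdigit := finFunctionFinEquiv_symm_apply_val n i.rev
  rw [Equiv.symm_apply_apply, Fin.rev_rev] at hdigit
  rw [baseDigits, ← ZMod.natCast_mod, ← hdigit, ZMod.natCast_zmod_val]

theorem baseDigits_add_one_apply_eq_zero_iff (p k n : ℕ) (j : Fin k) :
    baseDigits p k n j + 1 = 0 ↔ p ∣ n / p ^ (j.rev : ℕ) + 1 := by
  rw [baseDigits, ← Nat.cast_add_one, ZMod.natCast_eq_zero_iff]

theorem forall_gt_baseDigits_add_one_eq_zero_iff (p k n : ℕ) (i : Fin k) :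
    (∀ j, i < j → baseDigits p k n j + 1 = 0) ↔ p ^ (i.rev : ℕ) ∣ n + 1 := by
  simp only [baseDigits_add_one_apply_eq_zero_iff, Nat.pow_dvd_succ_iff_forall_dvd_div_pow_add_one]
  constructor
  · intro h m hm
    simpa using h (Fin.rev ⟨m, hm.trans i.rev.isLt⟩) (Fin.lt_rev_iff.mpr hm)
  · intro h j hij
    exact h _ (Fin.rev_lt_rev.mpr hij)

theorem mulAddCarry_one_baseDigits_add_one (p k n : ℕ) :
    mulAddCarry 1 (baseDigits p k n + 1) = baseDigits p k (n + 1) + 1 := by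
  funext i
  simp only [mulAddCarry, Pi.add_apply, Pi.one_apply, one_mul,
    forall_gt_baseDigits_add_one_eq_zero_iff]
  simp only [baseDigits, Nat.succ_div]
  split_ifs <;> push_cast <;> ring

theorem iterate_mulAddCarry_one (p k n : ℕ) :
    (mulAddCarry 1)^[n] (1 : Fin k → ZMod p) = baseDigits p k n + 1 := by
  induction n with
  | zero => funext i; simp [baseDigits]
  | succ n ih => rw [Function.iterate_succ_apply', ih, mulAddCarry_one_baseDigits_add_one]

theorem stmt_18_general {p : ℕ} (hodd : Odd p) (k : ℕ)
    (h : (Fin k → ZMod p) → (Fin k → ZMod p))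
    (hh : ∀ x i, h x i = x i + (if ∀ j, i < j → x j = 0 then 1 else 0)) :
    Function.Bijective h ∧
    Function.Bijective (fun x => h x + x) ∧
    ∀ x y : Fin k → ZMod p, ∃ n : ℕ, h^[n] x = y := by
  have : NeZero p := ⟨hodd.pos.ne'⟩
  have h_eq : h = mulAddCarry 1 := by
    funext x i
    rw [hh, mulAddCarry, one_mul]
    -- the statement decides its `if` by `Nat.decidableForallFin`, `mulAddCarry` by `Fintype`
    congr
  have h_add_eq : (fun x => h x + x) = mulAddCarry 2 := by
    funext x i
    rw [Pi.add_apply, hh, mulAddCarry, two_mul, add_right_comm]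
    congr
  have h_two : IsLeftRegular (2 : ZMod p) :=
    (ZMod.unitOfCoprime 2 (Nat.coprime_two_left.mpr hodd)).isUnit.isRegular.left
  have h_one : IsLeftRegular (1 : ZMod p) := isRegular_one.left
  refine ⟨h_eq ▸ mulAddCarry_bijective h_one, h_add_eq ▸ mulAddCarry_bijective h_two, ?_⟩
  subst h_eq
  refine (mulAddCarry_injective h_one).exists_iterate_eq (z := 1) fun y => ?_
  obtain ⟨n, hn⟩ := baseDigits_surjective p k (y - 1)
  exact ⟨n, by rw [iterate_mulAddCarry_one, hn, sub_add_cancel]⟩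

theorem stmt_18 {p : ℕ} (hp : p.Prime) (hodd : Odd p) (k : ℕ) (hk : 2 ≤ k)
    (h : (Fin k → ZMod p) → (Fin k → ZMod p))
    (hh : ∀ x i, h x i = x i + (if ∀ j, i < j → x j = 0 then 1 else 0)) :
    Function.Bijective h ∧
    Function.Bijective (fun x => h x + x) ∧
    ∀ x y : Fin k → ZMod p, ∃ n : ℕ, h^[n] x = y :=
  stmt_18_general hodd k h hh
end
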